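/- For natural n ≥ 1 and real s ≠ 0, ∫_ℝ e^{sx} ∑_{k=0}^{n−1} φ_k(x)² dx = (√(2n)/s) ∫_ℝ e^{sx} φ_n(x) φ_{n−1}(x) dx. -/

import Mathlib

open Real MeasureTheory

/-- Physicists' Hermite polynomial `H n x = (-1)^n e^{x^2} (d/dx)^n e^{-x^2}`. -/
noncomputable def physHermite (n : ℕ) (x : ℝ) : ℝ :=
  (-1)^n * Real.exp (x^2) * iteratedDeriv n (fun y => Real.exp (-y^2)) x

/-- Hermite function `φ k x = (2^k k! √π)^{-1/2} H_k(x) e^{-x²/2}`. -/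
noncomputable def hermiteFn (k : ℕ) (x : ℝ) : ℝ :=
  (Real.sqrt (2^k * k.factorial * Real.sqrt Real.pi))⁻¹ * physHermite k x * Real.exp (-x^2/2)

/-- Confluent hypergeometric function `₁F₁(-k; b; x)` with nonpositive integer first
parameter `-k`; it is the polynomial `∑_{j=0}^{k} ((-k)_j/(b)_j) x^j/j!`, where the rising
factorial `(-k)_j = (-1)^j k!/(k-j)!`. -/
noncomputable def oneF1neg (k : ℕ) (b x : ℝ) : ℝ :=
  ∑ j ∈ Finset.range (k+1),
    ((-1)^j * (k.descFactorial j : ℝ) / ∏ i ∈ Finset.range j, (b + i)) * x^j / (j.factorial : ℝ)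

/-- GUE mean density at σ² = 1/2: partial sum of squared Hermite functions. -/
noncomputable def pGUE (n : ℕ) (x : ℝ) : ℝ := ∑ k ∈ Finset.range n, hermiteFn k x ^ 2

/-- GUE mean density with general variance σ². -/
noncomputable def pGUEvar (n : ℕ) (σ x : ℝ) : ℝ :=
  (σ * Real.sqrt 2)⁻¹ * pGUE n (x / (σ * Real.sqrt 2))

/-- The function τₙ from the GSE/GOE densities. -/
noncomputable def tauFn (n : ℕ) (x : ℝ) : ℝ :=
  Real.sqrt (n/2) * hermiteFn (n-1) x *
    ((1/2) * ∫ t : ℝ, Real.sign (x - t) * hermiteFn n t)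

/-- The function αₙ (for odd n) from the GOE density. -/
noncomputable def alphaFn (n : ℕ) (x : ℝ) : ℝ :=
  hermiteFn (n-1) x / ∫ t : ℝ, hermiteFn (n-1) t

/-!
Write `φ_k = c_k H_k e^{-x²/2}`. The two Hermite recurrences `H_{k+1} = 2x H_k - H_k'` and
`H_k' = 2k H_{k-1}` give a raising and a lowering form of the derivative,
`φ_k' = x φ_k - √(2(k+1)) φ_{k+1} = √(2k) φ_{k-1} - x φ_k`. Using one form on each factor of
`(φ_k²)' = φ_k' φ_k + φ_k φ_k'` cancels the `x φ_k²` terms, so the sum telescopes to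
`(∑_{k<n} φ_k²)' = -√(2n) φ_n φ_{n-1}`. Integrating by parts against `e^{sx}` then gives the
identity; every integrand is a polynomial times `e^{sx - x²}`, hence integrable, and
integrability alone kills the boundary terms.
-/

open Polynomial Filter

noncomputable def physHermitePoly : ℕ → ℝ[X]
  | 0 => 1
  | n + 1 => 2 * X * physHermitePoly n - derivative (physHermitePoly n)

lemma physHermitePoly_succ (n : ℕ) :
    physHermitePoly (n + 1) = 2 * X * physHermitePoly n - derivative (physHermitePoly n) :=
  rfl

lemma derivative_physHermitePoly_succ (n : ℕ) :
    derivative (physHermitePoly (n + 1)) = 2 * (n + 1) * physHermitePoly n := by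
  induction n with
  | zero => simp [physHermitePoly]
  | succ n ih =>
    rw [physHermitePoly_succ (n + 1), derivative_sub, derivative_mul, derivative_mul, ih,
      physHermitePoly_succ n]
    simp only [derivative_mul, derivative_add, derivative_X,
      derivative_ofNat, derivative_natCast, derivative_one]
    push_cast
    ring

lemma derivative_physHermitePoly (n : ℕ) :
    derivative (physHermitePoly n) = 2 * n * physHermitePoly (n - 1) := by
  cases n with
  | zero => simp [physHermitePoly]
  | succ n => simpa using derivative_physHermitePoly_succ n

lemma iteratedDeriv_exp_neg_sq (n : ℕ) :
    iteratedDeriv n (fun y => exp (-y ^ 2))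
      = fun x => (-1) ^ n * (physHermitePoly n).eval x * exp (-x ^ 2) := by
  induction n with
  | zero => funext x; simp [physHermitePoly]
  | succ n ih =>
    funext x
    rw [iteratedDeriv_succ, ih]
    have hgauss : HasDerivAt (fun y : ℝ => exp (-y ^ 2)) (-(2 * x) * exp (-x ^ 2)) x := by
      simpa [mul_comm] using ((hasDerivAt_pow 2 x).neg).exp
    refine ((((physHermitePoly n).hasDerivAt x).const_mul ((-1 : ℝ) ^ n)).mul
      hgauss).deriv.trans ?_
    simp only [physHermitePoly_succ, eval_sub, eval_mul, eval_ofNat, eval_X, pow_succ]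
    ring

lemma physHermite_eq_eval (n : ℕ) (x : ℝ) : physHermite n x = (physHermitePoly n).eval x := by
  have hsign : ((-1 : ℝ) ^ n) * (-1) ^ n = 1 := by rw [← mul_pow]; simp
  have hexp : exp (x ^ 2) * exp (-x ^ 2) = 1 := by rw [← exp_add]; simp
  rw [physHermite, iteratedDeriv_exp_neg_sq]
  linear_combination (physHermitePoly n).eval x * ((-1) ^ n * (-1) ^ n) * hexp
    + (physHermitePoly n).eval x * hsign

noncomputable def hermiteFnConst (k : ℕ) : ℝ := (√(2 ^ k * k.factorial * √π))⁻¹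

lemma hermiteFn_eq (k : ℕ) (x : ℝ) :
    hermiteFn k x = hermiteFnConst k * (physHermitePoly k).eval x * exp (-x ^ 2 / 2) := by
  rw [hermiteFn, physHermite_eq_eval, hermiteFnConst]

lemma hermiteFnConst_eq_sqrt_mul_succ (k : ℕ) :
    hermiteFnConst k = √(2 * (k + 1)) * hermiteFnConst (k + 1) := by
  have hpos : 0 < √(2 * (k + 1) : ℝ) := by positivity
  have hsplit : (2 : ℝ) ^ (k + 1) * ((k + 1).factorial : ℝ) * √π
      = 2 * (k + 1) * (2 ^ k * k.factorial * √π) := by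
    push_cast [Nat.factorial_succ]; ring
  rw [hermiteFnConst, hermiteFnConst, hsplit, sqrt_mul (by positivity : (0 : ℝ) ≤ 2 * (k + 1)),
    mul_inv, mul_inv_cancel_left₀ hpos.ne']

lemma sqrt_mul_hermiteFnConst_pred (k : ℕ) :
    √(2 * k) * hermiteFnConst (k - 1) = 2 * k * hermiteFnConst k := by
  cases k with
  | zero => simp
  | succ k =>
    push_cast
    rw [hermiteFnConst_eq_sqrt_mul_succ k, ← mul_assoc,
      mul_self_sqrt (by positivity)]

lemma hasDerivAt_hermiteFn (k : ℕ) (x : ℝ) :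
    HasDerivAt (hermiteFn k) (hermiteFnConst k *
      ((derivative (physHermitePoly k)).eval x - x * (physHermitePoly k).eval x) *
        exp (-x ^ 2 / 2)) x := by
  have hgauss : HasDerivAt (fun y : ℝ => exp (-y ^ 2 / 2)) (-x * exp (-x ^ 2 / 2)) x := by
    have h : HasDerivAt (fun y : ℝ => -y ^ 2 / 2) (-x) x :=
      ((hasDerivAt_pow 2 x).fun_neg.div_const 2).congr_deriv (by norm_num; ring)
    exact h.exp.congr_deriv (mul_comm _ _)
  rw [show hermiteFn k = _ from funext (hermiteFn_eq k)]
  exact ((((physHermitePoly k).hasDerivAt x).const_mul (hermiteFnConst k)).fun_mul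
    hgauss).congr_deriv (by ring)

lemma hasDerivAt_hermiteFn_raising (k : ℕ) (x : ℝ) :
    HasDerivAt (hermiteFn k) (x * hermiteFn k x - √(2 * (k + 1)) * hermiteFn (k + 1) x) x := by
  have hH : (derivative (physHermitePoly k)).eval x
      = 2 * x * (physHermitePoly k).eval x - (physHermitePoly (k + 1)).eval x := by
    simp only [physHermitePoly_succ, eval_sub, eval_mul, eval_ofNat, eval_X]
    ring
  refine (hasDerivAt_hermiteFn k x).congr_deriv ?_
  symm
  rw [hermiteFn_eq, hermiteFn_eq, hH]
  linear_combination (physHermitePoly (k + 1)).eval x * exp (-x ^ 2 / 2) *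
    hermiteFnConst_eq_sqrt_mul_succ k

lemma hasDerivAt_hermiteFn_lowering (k : ℕ) (x : ℝ) :
    HasDerivAt (hermiteFn k) (√(2 * k) * hermiteFn (k - 1) x - x * hermiteFn k x) x := by
  refine (hasDerivAt_hermiteFn k x).congr_deriv ?_
  symm
  rw [hermiteFn_eq, hermiteFn_eq, derivative_physHermitePoly]
  simp only [eval_mul, eval_ofNat, eval_natCast]
  linear_combination (physHermitePoly (k - 1)).eval x * exp (-x ^ 2 / 2) *
    sqrt_mul_hermiteFnConst_pred k

lemma hasDerivAt_hermiteFn_sq (k : ℕ) (x : ℝ) :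
    HasDerivAt (fun y => hermiteFn k y ^ 2)
      (√(2 * k) * (hermiteFn k x * hermiteFn (k - 1) x)
        - √(2 * (k + 1)) * (hermiteFn (k + 1) x * hermiteFn k x)) x := by
  simp only [sq]
  exact ((hasDerivAt_hermiteFn_raising k x).fun_mul
    (hasDerivAt_hermiteFn_lowering k x)).congr_deriv (by ring)

lemma hasDerivAt_sum_hermiteFn_sq (n : ℕ) (x : ℝ) :
    HasDerivAt (fun y => ∑ k ∈ Finset.range n, hermiteFn k y ^ 2)
      (-(√(2 * n) * (hermiteFn n x * hermiteFn (n - 1) x))) x := by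
  induction n with
  | zero => simpa using hasDerivAt_const x (0 : ℝ)
  | succ n ih =>
    simp only [Finset.sum_range_succ]
    exact (ih.add (hasDerivAt_hermiteFn_sq n x)).congr_deriv (by push_cast; ring)

lemma integrable_eval_mul_exp_neg_mul_sq (P : ℝ[X]) {b : ℝ} (hb : 0 < b) :
    Integrable fun x => P.eval x * exp (-b * x ^ 2) := by
  simp_rw [eval_eq_sum_range, Finset.sum_mul]
  refine integrable_finsetSum _ fun i _ => ?_
  have hi : (-1 : ℝ) < i := by linarith [i.cast_nonneg (α := ℝ)]
  simpa [mul_assoc, rpow_natCast] using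
    (integrable_rpow_mul_exp_neg_mul_sq hb hi).const_mul (P.coeff i)

lemma integrable_eval_mul_exp_quadratic (P : ℝ[X]) (a : ℝ) {b : ℝ} (hb : 0 < b) :
    Integrable fun x => P.eval x * exp (a * x - b * x ^ 2) := by
  set c := a / (2 * b)
  have h := ((integrable_eval_mul_exp_neg_mul_sq (P.comp (X + C c)) hb).comp_sub_right c).const_mul
    (exp (b * c ^ 2))
  refine h.congr (Eventually.of_forall fun x => ?_)
  have hc : a = 2 * b * c := by simp only [c]; field_simp
  simp only [eval_comp, eval_add, eval_X, eval_C, sub_add_cancel]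
  rw [mul_left_comm, ← exp_add, hc]
  ring_nf

lemma integrable_exp_mul_hermiteFn_mul_hermiteFn (s : ℝ) (j k : ℕ) :
    Integrable fun x => exp (s * x) * hermiteFn j x * hermiteFn k x := by
  refine (integrable_eval_mul_exp_quadratic (C (hermiteFnConst j * hermiteFnConst k) *
    (physHermitePoly j * physHermitePoly k)) s one_pos).congr (Eventually.of_forall fun x => ?_)
  have hexp : exp (s * x - 1 * x ^ 2) = exp (s * x) * exp (-x ^ 2 / 2) * exp (-x ^ 2 / 2) := by
    rw [← exp_add, ← exp_add]; ring_nf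
  simp only [hermiteFn_eq, eval_mul, eval_C, hexp]
  ring

lemma integrable_exp_mul_sum_hermiteFn_sq (s : ℝ) (n : ℕ) :
    Integrable fun x => exp (s * x) * ∑ k ∈ Finset.range n, hermiteFn k x ^ 2 := by
  simp_rw [Finset.mul_sum, sq, ← mul_assoc]
  exact integrable_finsetSum _ fun k _ => integrable_exp_mul_hermiteFn_mul_hermiteFn s k k

lemma mul_integral_exp_mul_eq_neg_of_hasDerivAt {F F' : ℝ → ℝ} (s : ℝ)
    (hF : ∀ x, HasDerivAt F (F' x) x) (hi : Integrable fun x => exp (s * x) * F x)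
    (hi' : Integrable fun x => exp (s * x) * F' x) :
    s * ∫ x, exp (s * x) * F x = -∫ x, exp (s * x) * F' x := by
  have hderiv (x : ℝ) : HasDerivAt (fun y => exp (s * y) * F y)
      (s * (exp (s * x) * F x) + exp (s * x) * F' x) x :=
    ((((hasDerivAt_id x).const_mul s).exp).fun_mul (hF x)).congr_deriv
      (by simp only [id, mul_one]; ring)
  have h := integral_eq_zero_of_hasDerivAt_of_integrable hderiv ((hi.const_mul s).add hi') hi
  rw [integral_add (hi.const_mul s) hi', integral_const_mul] at h
  linarith

theorem gue_mgf_reduction_general (n : ℕ) (s : ℝ) (hs : s ≠ 0) :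
    ∫ x : ℝ, Real.exp (s*x) * ∑ k ∈ Finset.range n, hermiteFn k x ^ 2 =
      (Real.sqrt (2*n) / s) * ∫ x : ℝ, Real.exp (s*x) * hermiteFn n x * hermiteFn (n-1) x := by
  have hrw : (fun x => exp (s * x) * -(√(2 * n) * (hermiteFn n x * hermiteFn (n - 1) x)))
      = fun x => -√(2 * n) * (exp (s * x) * hermiteFn n x * hermiteFn (n - 1) x) := by
    funext x; ring
  have hparts := mul_integral_exp_mul_eq_neg_of_hasDerivAt s (hasDerivAt_sum_hermiteFn_sq n)
    (integrable_exp_mul_sum_hermiteFn_sq s n)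
    (hrw ▸ (integrable_exp_mul_hermiteFn_mul_hermiteFn s n (n - 1)).const_mul _)
  rw [hrw, integral_const_mul] at hparts
  field_simp
  linarith

theorem gue_mgf_reduction (n : ℕ) (hn : 1 ≤ n) (s : ℝ) (hs : s ≠ 0) :
    ∫ x : ℝ, Real.exp (s*x) * ∑ k ∈ Finset.range n, hermiteFn k x ^ 2 =
      (Real.sqrt (2*n) / s) * ∫ x : ℝ, Real.exp (s*x) * hermiteFn n x * hermiteFn (n-1) x :=
  gue_mgf_reduction_general n s hs
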